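/- Let f: Σ → ℝ^d be continuous and α ∈ ℝ^d. If X_α ∩ Σ̃ ≠ ∅, then there exists μ ∈ M(Σ,σ) such that ∫ f dμ = α and λ(μ,σ) > 0. -/

import Mathlib

open MeasureTheory Set Filter Topology

noncomputable section

/-- A finite measurable partition of the space. -/
def IsMeasPartition {X : Type*} [MeasurableSpace X] (P : Finset (Set X)) : Prop :=
  (∀ s ∈ P, MeasurableSet s) ∧ ((P : Set (Set X)).PairwiseDisjoint id) ∧ (⋃ s ∈ P, s) = univ

/-- Shannon entropy of the refinement `⋁_{i<n} T^{-i} P` of a finite partition `P`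
under the first `n` iterates of `T`, with respect to the measure `μ`. -/
def partEntropy {X : Type*} [MeasurableSpace X] (T : X → X) (μ : Measure X)
    (P : Finset (Set X)) (n : ℕ) : ℝ :=
  ∑ c : Fin n → {s // s ∈ P},
    Real.negMulLog (μ (⋂ i : Fin n, T^[(i : ℕ)] ⁻¹' ((c i : Set X)))).toReal

/-- The Kolmogorov–Sinai (metric) entropy of the measure `μ` for the map `T`:
the supremum over finite measurable partitions `P` of
`lim_n (1/n) H(⋁_{i<n} T^{-i}P)`, the limit being computed as an infimum (by
subadditivity of the entropy sequence). -/
def metricEntropy {X : Type*} [MeasurableSpace X] (T : X → X) (μ : Measure X) : ℝ :=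
  ⨆ P : {P : Finset (Set X) // IsMeasPartition P},
    ⨅ n : ℕ, partEntropy T μ (P : Finset (Set X)) (n + 1) / (n + 1)

/-- Birkhoff (ergodic) average `A_n f(x) = (1/n) ∑_{j<n} f(T^j x)`. -/
def birkhoff {X E : Type*} [AddCommMonoid E] [Module ℝ E]
    (T : X → X) (f : X → E) (n : ℕ) (x : X) : E :=
  (n : ℝ)⁻¹ • ∑ j ∈ Finset.range n, f (T^[j] x)

/-- The full shift space `Σ = {1,…,m}^ℕ`. -/
abbrev SymbSp (m : ℕ) := ℕ → Fin m

/-- The shift map `σ` on `Σ`. -/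
def shift {m : ℕ} (ω : SymbSp m) : SymbSp m := fun n => ω (n + 1)

/-- The set `M(Σ,σ)` of shift-invariant Borel probability measures on `Σ`. -/
def shiftInvMeasures (m : ℕ) : Set (Measure (SymbSp m)) :=
  {μ | IsProbabilityMeasure μ ∧ μ.map shift = μ}

/-- The level set `X_α = {ω ∈ Σ : lim_n A_n f(ω) = α}` of a potential `f` on `Σ`. -/
def symbLevelSet {m : ℕ} {E : Type*} [AddCommMonoid E] [Module ℝ E] [TopologicalSpace E]
    (f : SymbSp m → E) (α : E) : Set (SymbSp m) :=
  {ω | Tendsto (fun n => birkhoff shift f n ω) atTop (𝓝 α)}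

/-- A piecewise `C¹` expanding (possibly non-uniformly hyperbolic) interval map:
`m` pairwise non-overlapping subintervals `I 1, …, I m` of `[0,1]`, a map `T` which
restricted to each `I i` is a `C¹` surjection onto `[0,1]` (with derivative `T'`),
a unique fixed point `fixPt i` of `T` in each `I i`, and `T' > 1` away from the
fixed points. -/
structure PCSystem (m : ℕ) where
  hm : 0 < m
  I : Fin m → Set ℝ
  T : ℝ → ℝ
  T' : ℝ → ℝ
  fixPt : Fin m → ℝ
  hI : ∀ i, ∃ a b : ℝ, a < b ∧ I i = Icc a b
  hIsub : ∀ i, I i ⊆ Icc 0 1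
  hdisj : ∀ i j, i ≠ j → Disjoint (interior (I i)) (interior (I j))
  hTmeas : Measurable T
  hT'meas : Measurable T'
  hmapsto : ∀ i, MapsTo T (I i) (Icc 0 1)
  hsurj : ∀ i, SurjOn T (I i) (Icc 0 1)
  hderiv : ∀ i, ∀ x ∈ I i, HasDerivWithinAt T (T' x) (I i) x
  hT'cont : ∀ i, ContinuousOn T' (I i)
  hfixmem : ∀ i, fixPt i ∈ I i
  hfix : ∀ i, T (fixPt i) = fixPt i
  hfixuniq : ∀ i, ∀ y ∈ I i, T y = y → y = fixPt i
  hexp : ∀ y ∈ ⋃ i, I i, y ∉ range fixPt → 1 < T' y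

namespace PCSystem

variable {m : ℕ} (S : PCSystem m)

/-- The attractor `Λ = {x ∈ ⋃ I_i : T^n x ∈ [0,1] for all n}`. -/
def attractor : Set ℝ :=
  {x | (x ∈ ⋃ i, S.I i) ∧ ∀ n : ℕ, S.T^[n] x ∈ Icc (0:ℝ) 1}

/-- The basic interval `I_w = T_{w₁}∘⋯∘T_{wₙ}([0,1])` coded by the word `w`,
described via the forward map: `I_{i·w} = I_i ∩ T⁻¹(I_w)`. -/
def cyl (S : PCSystem m) : List (Fin m) → Set ℝ
  | [] => Icc 0 1
  | i :: w => S.I i ∩ S.T ⁻¹' (cyl S w)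

end PCSystem

/-- The word `ω₁…ωₙ` of the first `n` symbols of `ω`. -/
def word {m : ℕ} (ω : SymbSp m) (n : ℕ) : List (Fin m) := List.ofFn fun j : Fin n => ω j

namespace PCSystem

variable {m : ℕ} (S : PCSystem m)

/-- The coding map `Π : Σ → Λ`, `Π(ω) = lim_n T_{ω₁}∘⋯∘T_{ωₙ}([0,1])`
(realized as the supremum of the nested intersection `⋂_n I_{ω|_n}`, which is
a single point). -/
def code (ω : SymbSp m) : ℝ := sSup (⋂ n : ℕ, S.cyl (word ω n))

/-- The geometric potential `g(ω) = −log T'_{ω₁}(Π(σω)) = log T'(Π(ω))`. -/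
def g (ω : SymbSp m) : ℝ := Real.log (S.T' (S.code ω))

/-- `Σ̃ = {ω : liminf_n A_n g(ω) > 0}`. -/
def SigmaTilde : Set (SymbSp m) :=
  {ω | 0 < atTop.liminf fun n => birkhoff shift S.g n ω}

/-- The set `M(Λ,T)` of `T`-invariant Borel probability measures on the attractor `Λ`. -/
def invMeasures : Set (Measure ℝ) :=
  {μ | IsProbabilityMeasure μ ∧ μ.map S.T = μ ∧ μ S.attractorᶜ = 0}

/-- Lyapunov exponent `λ(μ,T) = ∫ log|T'| dμ` of a measure on the attractor. -/
def lyap (μ : Measure ℝ) : ℝ := ∫ x, Real.log |S.T' x| ∂μ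

/-- Lyapunov exponent `λ(μ,σ) = ∫ g dμ` of a measure on the shift space. -/
def lyapSymb (μ : Measure (SymbSp m)) : ℝ := ∫ ω, S.g ω ∂μ

/-- The set of parabolic fixed points, i.e. those fixed points `x_j` with `T'(x_j) = 1`. -/
def parabolicSet : Set ℝ := {y | ∃ i, y = S.fixPt i ∧ S.T' y = 1}

/-- The level set `Λ_α = {x ∈ Λ : lim_n (1/n)∑_{j<n} F(T^j x) = α}`. -/
def levelSet {E : Type*} [AddCommMonoid E] [Module ℝ E] [TopologicalSpace E]
    (F : ℝ → E) (α : E) : Set ℝ :=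
  {x | x ∈ S.attractor ∧ Tendsto (fun n => birkhoff S.T F n x) atTop (𝓝 α)}

/-- `Λ̃`: the set of points of the attractor having exactly two codings. -/
def doubleCoded : Set ℝ := {x | x ∈ S.attractor ∧ (S.code ⁻¹' {x}).ncard = 2}

end PCSystem


/-!
The measure is a limit point of the empirical measures `(1/n) ∑_{j<n} δ_{σ^j ω}` along the orbit
of a point `ω ∈ X_α ∩ Σ̃` (Krylov–Bogolyubov). Along a suitable subsequence the Birkhoff averages
of every continuous function converge to its integral, which gives `∫ f dμ = α` and
`λ(μ, σ) ≥ liminf A_n g(ω) > 0`. The second step needs `g`, hence the coding map, to be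
continuous. Since `T' > 1` off finitely many points, `T - id` is strictly increasing on each
`I_i`, so by compactness `T` stretches any two points of `I_i` at distance `≥ ε` by a further
`δ(ε) > 0`. Two points of `I_{ω|n}` at distance `≥ ε` would therefore have images under `T^n` at
distance `≥ nδ`, which is impossible in `[0,1]` for large `n`: the basic intervals shrink to points.
-/

open scoped ENNReal

lemma birkhoff_comp_sub {X E : Type*} [AddCommGroup E] [Module ℝ E] (T : X → X) (h : X → E)
    (n : ℕ) (x : X) :
    birkhoff T (h ∘ T) n x - birkhoff T h n x = (n : ℝ)⁻¹ • (h (T^[n] x) - h x) := by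
  simp only [birkhoff, ← smul_sub, ← Finset.sum_sub_distrib, Function.comp_apply,
    ← Function.iterate_succ_apply' T]
  rw [Finset.sum_range_sub (fun j => h (T^[j] x))]
  rfl

lemma norm_birkhoff_le {X E : Type*} [SeminormedAddCommGroup E] [NormedSpace ℝ E] (T : X → X)
    {h : X → E} {C : ℝ} (hC : ∀ y, ‖h y‖ ≤ C) (n : ℕ) (x : X) : ‖birkhoff T h n x‖ ≤ C := by
  rcases n.eq_zero_or_pos with rfl | hn
  · simpa [birkhoff] using (norm_nonneg _).trans (hC x)
  calc ‖birkhoff T h n x‖ ≤ (n : ℝ)⁻¹ * ∑ j ∈ Finset.range n, ‖h (T^[j] x)‖ := by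
        rw [birkhoff, norm_smul, Real.norm_of_nonneg (by positivity)]
        gcongr
        exact norm_sum_le _ _
    _ ≤ (n : ℝ)⁻¹ * (n * C) := by
        gcongr
        simpa using Finset.sum_le_sum fun j (_ : j ∈ Finset.range n) => hC (T^[j] x)
    _ = C := by field_simp

lemma ContinuousLinearMap.map_birkhoff {X E F : Type*} [NormedAddCommGroup E] [NormedSpace ℝ E]
    [NormedAddCommGroup F] [NormedSpace ℝ F] (L : E →L[ℝ] F) (T : X → X) (f : X → E) (n : ℕ)
    (x : X) : L (birkhoff T f n x) = birkhoff T (L ∘ f) n x := by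
  simp [birkhoff]

section EmpiricalMeasure

variable {X : Type*} [MeasurableSpace X]

def empiricalMeasure (T : X → X) (x : X) (n : ℕ) : Measure X :=
  (n : ℝ≥0∞)⁻¹ • ∑ j ∈ Finset.range n, Measure.dirac (T^[j] x)

lemma isProbabilityMeasure_empiricalMeasure (T : X → X) (x : X) {n : ℕ} (hn : n ≠ 0) :
    IsProbabilityMeasure (empiricalMeasure T x n) := by
  constructor
  simp [empiricalMeasure, ENNReal.inv_mul_cancel (Nat.cast_ne_zero.2 hn) (ENNReal.natCast_ne_top n)]

lemma integral_empiricalMeasure [MeasurableSingletonClass X] {E : Type*} [NormedAddCommGroup E]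
    [NormedSpace ℝ E] [CompleteSpace E] (T : X → X) (x : X) (n : ℕ) (h : X → E) :
    ∫ y, h y ∂(empiricalMeasure T x n) = birkhoff T h n x := by
  rw [empiricalMeasure, integral_smul_measure, integral_finsetSum_measure
    fun j _ => integrable_dirac enorm_lt_top]
  simp [birkhoff]

end EmpiricalMeasure

section CompactSpace

variable {X : Type*} [TopologicalSpace X] [CompactSpace X] {T : X → X}

lemma tendsto_birkhoff_comp_sub {E : Type*} [NormedAddCommGroup E] [NormedSpace ℝ E]
    {h : X → E} (hh : Continuous h) (x : X) :
    Tendsto (fun n => birkhoff T (h ∘ T) n x - birkhoff T h n x) atTop (𝓝 0) := by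
  let hb := BoundedContinuousFunction.mkOfCompact ⟨h, hh⟩
  simp_rw [birkhoff_comp_sub]
  refine (tendsto_inv_atTop_zero.comp tendsto_natCast_atTop_atTop).zero_smul_isBoundedUnder_le
    (isBoundedUnder_of ⟨2 * ‖hb‖, fun n => ?_⟩)
  simpa [dist_eq_norm, hb] using hb.dist_le_two_norm (T^[n] x) x

variable [MeasurableSpace X]

theorem exists_invariant_tendsto_birkhoff [TopologicalSpace.MetrizableSpace X] [BorelSpace X]
    (hT : Continuous T) (x : X) :
    ∃ μ : Measure X, IsProbabilityMeasure μ ∧ μ.map T = μ ∧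
      ∃ l : Filter ℕ, l.NeBot ∧ l ≤ atTop ∧ ∀ h : X → ℝ, Continuous h →
        Tendsto (fun n => birkhoff T h n x) l (𝓝 (∫ y, h y ∂μ)) := by
  -- shifted by one, since `empiricalMeasure T x 0 = 0`
  let ν : ℕ → ProbabilityMeasure X := fun n =>
    ⟨empiricalMeasure T x (n + 1), isProbabilityMeasure_empiricalMeasure T x n.succ_ne_zero⟩
  let U : Ultrafilter ℕ := Ultrafilter.of atTop
  obtain ⟨μ, -, hμ⟩ := isCompact_univ.ultrafilter_le_nhds (U.map ν) (by simp)
  have hconv : ∀ h : X → ℝ, Continuous h →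
      Tendsto (fun n => birkhoff T h (n + 1) x) U (𝓝 (∫ y, h y ∂(μ : Measure X))) := by
    intro h hh
    simpa [ν, integral_empiricalMeasure] using
      ProbabilityMeasure.tendsto_iff_forall_integral_tendsto.1 hμ
        (BoundedContinuousFunction.mkOfCompact ⟨h, hh⟩)
  refine ⟨μ, inferInstance, ?_, (U : Filter ℕ).map (· + 1), inferInstance,
    (map_mono (Ultrafilter.of_le _)).trans (tendsto_add_atTop_nat 1),
    fun h hh => tendsto_map'_iff.2 (hconv h hh)⟩
  refine ext_of_forall_integral_eq_of_IsFiniteMeasure fun h => ?_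
  rw [integral_map hT.aemeasurable h.continuous.aestronglyMeasurable]
  refine tendsto_nhds_unique (hconv _ (h.continuous.comp hT)) ?_
  simpa [Function.comp_def] using (hconv h h.continuous).add
    (((tendsto_birkhoff_comp_sub (T := T) h.continuous x).comp (tendsto_add_atTop_nat 1)).mono_left
      (Ultrafilter.of_le _))

variable {x : X} {μ : Measure X} {l : Filter ℕ} [l.NeBot]

lemma integral_eq_of_tendsto_birkhoff [OpensMeasurableSpace X] [IsFiniteMeasure μ]
    (hl : l ≤ atTop)
    (hconv : ∀ h : X → ℝ, Continuous h →
      Tendsto (fun n => birkhoff T h n x) l (𝓝 (∫ y, h y ∂μ)))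
    {E : Type*} [NormedAddCommGroup E] [NormedSpace ℝ E] [CompleteSpace E] {f : X → E}
    (hf : Continuous f) {α : E} (hα : Tendsto (fun n => birkhoff T f n x) atTop (𝓝 α)) :
    ∫ y, f y ∂μ = α := by
  refine (SeparatingDual.eq_iff_forall_dual_eq (R := ℝ)).2 fun L => ?_
  rw [← L.integral_comp_comm (hf.integrable_of_hasCompactSupport (.of_compactSpace f))]
  refine tendsto_nhds_unique (hconv _ (L.continuous.comp hf)) ?_
  simpa [Function.comp_def, L.map_birkhoff] using ((L.continuous.tendsto α).comp hα).mono_left hl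

lemma liminf_birkhoff_le_integral (hl : l ≤ atTop)
    (hconv : ∀ h : X → ℝ, Continuous h →
      Tendsto (fun n => birkhoff T h n x) l (𝓝 (∫ y, h y ∂μ)))
    {h : X → ℝ} (hh : Continuous h) :
    atTop.liminf (fun n => birkhoff T h n x) ≤ ∫ y, h y ∂μ := by
  let hb := BoundedContinuousFunction.mkOfCompact ⟨h, hh⟩
  have hbdd : IsBoundedUnder (· ≥ ·) atTop fun n => birkhoff T h n x :=
    isBoundedUnder_of ⟨-‖hb‖, fun n =>
      neg_le_of_abs_le (norm_birkhoff_le T hb.norm_coe_le_norm n x)⟩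
  exact liminf_le_of_le hbdd fun b hb => ge_of_tendsto (hconv h hh) (hl hb)

end CompactSpace

lemma word_succ {m : ℕ} (ω : SymbSp m) (n : ℕ) : word ω (n + 1) = ω 0 :: word (shift ω) n := by
  simp only [word, List.ofFn_succ]
  rfl

lemma word_length {m : ℕ} (ω : SymbSp m) (n : ℕ) : (word ω n).length = n := by
  simp [word]

lemma eventually_word_eq {m : ℕ} (ω : SymbSp m) (n : ℕ) : ∀ᶠ ω' in 𝓝 ω, word ω' n = word ω n := by
  have hprefix : Continuous fun ω' : SymbSp m => fun j : Fin n => ω' j :=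
    continuous_pi fun j => continuous_apply _
  filter_upwards [hprefix.continuousAt.eventually_mem ((isOpen_discrete _).mem_nhds rfl)]
    with ω' hω'
  simp only [word, mem_singleton_iff.1 hω']

lemma continuous_shift {m : ℕ} : Continuous (shift : SymbSp m → SymbSp m) :=
  continuous_pi fun n => continuous_apply (n + 1)

namespace PCSystem

variable {m : ℕ} (S : PCSystem m)

lemma continuousOn_T (i : Fin m) : ContinuousOn S.T (S.I i) :=
  fun x hx => (S.hderiv i x hx).continuousWithinAt

lemma isClosed_I (i : Fin m) : IsClosed (S.I i) := by
  obtain ⟨a, b, -, hI⟩ := S.hI i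
  exact hI ▸ isClosed_Icc

lemma hasDerivAt_T {i : Fin m} {x : ℝ} (hx : S.I i ∈ 𝓝 x) : HasDerivAt S.T (S.T' x) x :=
  (S.hderiv i x (mem_of_mem_nhds hx)).hasDerivAt hx

lemma one_le_T' {i : Fin m} {x : ℝ} (hx : x ∈ S.I i) : 1 ≤ S.T' x := by
  obtain ⟨a, b, hab, hI⟩ := S.hI i
  have hclosed : IsClosed (S.I i ∩ S.T' ⁻¹' Ici 1) :=
    (S.hT'cont i).preimage_isClosed_of_isClosed (S.isClosed_I i) isClosed_Ici
  have hgood : Ioo a b ∩ (range S.fixPt)ᶜ ⊆ S.I i ∩ S.T' ⁻¹' Ici 1 := fun y hy =>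
    have hyI : y ∈ S.I i := hI ▸ Ioo_subset_Icc_self hy.1
    ⟨hyI, (S.hexp y (mem_iUnion.2 ⟨i, hyI⟩) hy.2).le⟩
  -- the finitely many fixed points do not affect the closure of `Ioo a b`
  have hdense : Ioo a b ⊆ closure (Ioo a b ∩ (range S.fixPt)ᶜ) :=
    ((finite_range S.fixPt).countable.dense_compl ℝ).open_subset_closure_inter isOpen_Ioo
  have hsub : closure (Ioo a b) ⊆ S.I i ∩ S.T' ⁻¹' Ici 1 :=
    closure_minimal (hdense.trans (closure_minimal hgood hclosed)) hclosed
  rw [closure_Ioo hab.ne, ← hI] at hsub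
  exact (hsub hx).2

lemma monotoneOn_T_sub_id (i : Fin m) : MonotoneOn (fun x => S.T x - x) (S.I i) := by
  obtain ⟨a, b, -, hI⟩ := S.hI i
  refine monotoneOn_of_hasDerivWithinAt_nonneg (hI ▸ convex_Icc a b)
    ((S.continuousOn_T i).sub continuousOn_id) (f' := fun x => S.T' x - 1)
    (fun x hx => ((S.hasDerivAt_T (mem_interior_iff_mem_nhds.1 hx)).sub
      (hasDerivAt_id x)).hasDerivWithinAt)
    fun x hx => sub_nonneg.2 (S.one_le_T' (interior_subset hx))

lemma strictMonoOn_T_sub_id (i : Fin m) : StrictMonoOn (fun x => S.T x - x) (S.I i) := by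
  intro x hx y hy hxy
  refine (S.monotoneOn_T_sub_id i hx hy hxy.le).lt_of_ne fun heq => ?_
  obtain ⟨a, b, -, hI⟩ := S.hI i
  have hIcc : Icc x y ⊆ S.I i := hI ▸ Icc_subset_Icc (hI ▸ hx).1 (hI ▸ hy).2
  obtain ⟨t, ht, htF⟩ := ((Ioo_infinite hxy).sdiff (finite_range S.fixPt)).nonempty
  -- `T - id` is constant on `[x, y]`, so `T' = 1` at the non-fixed point `t`
  have hconst : (fun s => S.T s - s) =ᶠ[𝓝 t] fun _ => S.T x - x := by
    filter_upwards [Ioo_mem_nhds ht.1 ht.2] with s hs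
    exact le_antisymm
      ((S.monotoneOn_T_sub_id i (hIcc (Ioo_subset_Icc_self hs)) hy hs.2.le).trans_eq heq.symm)
      (S.monotoneOn_T_sub_id i hx (hIcc (Ioo_subset_Icc_self hs)) hs.1.le)
  have hderiv := (S.hasDerivAt_T (mem_of_superset (Icc_mem_nhds ht.1 ht.2) hIcc)).sub
    (hasDerivAt_id t)
  have h1 : S.T' t - 1 = 0 := hderiv.unique ((hasDerivAt_const t _).congr_of_eventuallyEq hconst)
  have h2 := S.hexp t (mem_iUnion.2 ⟨i, hIcc (Ioo_subset_Icc_self ht)⟩) htF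
  linarith

lemma exists_pos_add_le_T_sub {ε : ℝ} (hε : 0 < ε) :
    ∃ δ > 0, ∀ i, ∀ x ∈ S.I i, ∀ y ∈ S.I i, x + ε ≤ y → y - x + δ ≤ S.T y - S.T x := by
  have hgain : ∀ i, ∀ᶠ δ in 𝓝[>] (0 : ℝ),
      ∀ x ∈ S.I i, ∀ y ∈ S.I i, x + ε ≤ y → y - x + δ ≤ S.T y - S.T x := by
    intro i
    set K := (S.I i ×ˢ S.I i) ∩ {p : ℝ × ℝ | p.1 + ε ≤ p.2}
    have hK : IsCompact K := by
      obtain ⟨a, b, -, hI⟩ := S.hI i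
      refine (hI ▸ isCompact_Icc.prod isCompact_Icc).inter_right ?_
      exact isClosed_le (by fun_prop) (by fun_prop)
    have hcont : ContinuousOn (fun p : ℝ × ℝ => (S.T p.2 - p.2) - (S.T p.1 - p.1)) K := by
      refine ContinuousOn.sub ?_ ?_
      · exact ((S.continuousOn_T i).comp continuousOn_snd fun p hp => hp.1.2).sub continuousOn_snd
      · exact ((S.continuousOn_T i).comp continuousOn_fst fun p hp => hp.1.1).sub continuousOn_fst
    obtain ⟨δ, hδ, hδK⟩ := hK.exists_forall_le' hcont fun p hp =>
      sub_pos.2 (S.strictMonoOn_T_sub_id i hp.1.1 hp.1.2 ((lt_add_of_pos_right _ hε).trans_le hp.2))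
    filter_upwards [Ioo_mem_nhdsGT hδ] with δ' hδ' x hx y hy hxy
    linarith [hδK (x, y) ⟨⟨hx, hy⟩, hxy⟩, hδ'.2]
  obtain ⟨δ, hδ, hpos⟩ := ((eventually_all.2 hgain).and self_mem_nhdsWithin).exists
  exact ⟨δ, hpos, hδ⟩

lemma cyl_subset_Icc : ∀ w : List (Fin m), S.cyl w ⊆ Icc 0 1
  | [] => subset_rfl
  | i :: _ => inter_subset_left.trans (S.hIsub i)

lemma cyl_nonempty : ∀ w : List (Fin m), (S.cyl w).Nonempty
  | [] => nonempty_Icc.2 zero_le_one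
  | i :: w => by
    obtain ⟨y, hy⟩ := cyl_nonempty w
    obtain ⟨x, hx, rfl⟩ := S.hsurj i (S.cyl_subset_Icc w hy)
    exact ⟨x, hx, hy⟩

lemma isClosed_cyl : ∀ w : List (Fin m), IsClosed (S.cyl w)
  | [] => isClosed_Icc
  | i :: w => (S.continuousOn_T i).preimage_isClosed_of_isClosed (S.isClosed_I i) (isClosed_cyl w)

lemma isCompact_cyl (w : List (Fin m)) : IsCompact (S.cyl w) :=
  isCompact_Icc.of_isClosed_subset (S.isClosed_cyl w) (S.cyl_subset_Icc w)

lemma cyl_word_succ_subset (n : ℕ) (ω : SymbSp m) :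
    S.cyl (word ω (n + 1)) ⊆ S.cyl (word ω n) := by
  induction n generalizing ω with
  | zero => exact S.cyl_subset_Icc _
  | succ n ih =>
    rw [word_succ ω (n + 1), word_succ ω n]
    exact inter_subset_inter_right _ (preimage_mono (ih (shift ω)))

lemma code_mem_cyl (ω : SymbSp m) (n : ℕ) : S.code ω ∈ S.cyl (word ω n) := by
  have hne : (⋂ k, S.cyl (word ω k)).Nonempty :=
    IsCompact.nonempty_iInter_of_sequence_nonempty_isCompact_isClosed _
      (fun k => S.cyl_word_succ_subset k ω) (fun k => S.cyl_nonempty _) (S.isCompact_cyl _)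
      (fun k => S.isClosed_cyl _)
  have hcpt : IsCompact (⋂ k, S.cyl (word ω k)) :=
    (S.isCompact_cyl _).of_isClosed_subset (isClosed_iInter fun k => S.isClosed_cyl _)
      (iInter_subset _ 0)
  exact mem_iInter.1 (hcpt.sSup_mem hne) n

lemma code_mem_I (ω : SymbSp m) : S.code ω ∈ S.I (ω 0) := by
  have h := S.code_mem_cyl ω 1
  rw [word_succ] at h
  exact h.1

lemma add_length_mul_le_one {ε δ : ℝ} (hδ : 0 ≤ δ)
    (hgain : ∀ i, ∀ x ∈ S.I i, ∀ y ∈ S.I i, x + ε ≤ y → y - x + δ ≤ S.T y - S.T x) :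
    ∀ w : List (Fin m), ∀ x ∈ S.cyl w, ∀ y ∈ S.cyl w, x + ε ≤ y → y - x + w.length * δ ≤ 1
  | [] => fun x (hx : x ∈ Icc 0 1) y (hy : y ∈ Icc 0 1) _ => by
    simp only [List.length_nil, CharP.cast_eq_zero, zero_mul, add_zero]
    linarith [hx.1, hy.2]
  | i :: w => fun x hx y hy hxy => by
    have hT := hgain i x hx.1 y hy.1 hxy
    have ih := add_length_mul_le_one hδ hgain w _ hx.2 _ hy.2 (by linarith)
    simp only [List.length_cons, Nat.cast_succ]
    linarith

lemma exists_abs_sub_lt_of_mem_cyl_word (ω : SymbSp m) {ε : ℝ} (hε : 0 < ε) :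
    ∃ n, ∀ x ∈ S.cyl (word ω n), ∀ y ∈ S.cyl (word ω n), |x - y| < ε := by
  obtain ⟨δ, hδ, hgain⟩ := S.exists_pos_add_le_T_sub hε
  obtain ⟨n, hn⟩ := exists_nat_gt δ⁻¹
  have hnδ : 1 < n * δ := by rwa [inv_lt_iff_one_lt_mul₀ hδ] at hn
  have hsub : ∀ x ∈ S.cyl (word ω n), ∀ y ∈ S.cyl (word ω n), y - x < ε := by
    intro x hx y hy
    by_contra! hxy
    have := S.add_length_mul_le_one hδ.le hgain _ x hx y hy (by linarith)
    rw [word_length] at this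
    linarith
  exact ⟨n, fun x hx y hy => abs_sub_lt_iff.2 ⟨hsub y hy x hx, hsub x hx y hy⟩⟩

lemma continuous_code : Continuous S.code := by
  refine continuous_iff_continuousAt.2 fun ω => Metric.tendsto_nhds.2 fun ε hε => ?_
  obtain ⟨n, hn⟩ := S.exists_abs_sub_lt_of_mem_cyl_word ω hε
  filter_upwards [eventually_word_eq ω n] with ω' hω'
  exact hn _ (hω' ▸ S.code_mem_cyl ω' n) _ (S.code_mem_cyl ω n)

lemma continuous_g : Continuous S.g := by
  refine continuous_iff_continuousAt.2 fun ω => ?_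
  have hI : ∀ᶠ ω' in 𝓝 ω, S.code ω' ∈ S.I (ω 0) := by
    filter_upwards [(continuous_apply 0).continuousAt.eventually_mem
      ((isOpen_discrete {ω 0}).mem_nhds rfl)] with ω' hω'
    exact mem_singleton_iff.1 hω' ▸ S.code_mem_I ω'
  have hcode : Tendsto S.code (𝓝 ω) (𝓝[S.I (ω 0)] (S.code ω)) :=
    tendsto_nhdsWithin_iff.2 ⟨S.continuous_code.continuousAt, hI⟩
  have hT'pos : S.T' (S.code ω) ≠ 0 := by linarith [S.one_le_T' (S.code_mem_I ω)]
  exact (Real.continuousAt_log hT'pos).tendsto.comp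
    ((S.hT'cont _ _ (S.code_mem_I ω)).tendsto.comp hcode)

end PCSystem

/-- **Lemma 4 (Statement 7).** If `X_α ∩ Σ̃ ≠ ∅` then there is an invariant measure
with `∫ f dμ = α` and positive Lyapunov exponent. -/
theorem statement7 {m d : ℕ} (S : PCSystem m)
    (f : SymbSp m → EuclideanSpace ℝ (Fin d)) (hf : Continuous f)
    (α : EuclideanSpace ℝ (Fin d))
    (hne : (symbLevelSet f α ∩ S.SigmaTilde).Nonempty) :
    ∃ μ ∈ shiftInvMeasures m, (∫ ω, f ω ∂μ) = α ∧ 0 < S.lyapSymb μ := by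
  obtain ⟨ω, hα, hpos⟩ := hne
  obtain ⟨μ, hμ, hinv, l, hl, hlat, hconv⟩ := exists_invariant_tendsto_birkhoff continuous_shift ω
  exact ⟨μ, ⟨hμ, hinv⟩, integral_eq_of_tendsto_birkhoff hlat hconv hf hα,
    hpos.trans_le (liminf_birkhoff_le_integral hlat hconv S.continuous_g)⟩
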